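/- There exists a constant C > 0 (depending only on K) such that for all λ > 0, x > 0 and z > −1, the jump increment of the Black–Scholes delta satisfies | Φ(d(λ, x(1+z))) − Φ(d(λ, x)) | ≤ C x^{−1/2} λ^{−1/2} e^{−λ/8} ϖ₀(z), where ϖ₀(z) = 1 + (1+z)^{−1/2}·1_{{−1<z≤0}}. -/

import Mathlib

open MeasureTheory

/-- Standard normal density φ(a) = (2π)^{−1/2} e^{−a²/2}. -/
noncomputable def stdNormalPdf (a : ℝ) : ℝ :=
  (Real.sqrt (2 * Real.pi))⁻¹ * Real.exp (-(a ^ 2) / 2)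

/-- Standard normal distribution function Φ(a) = ∫_{−∞}^a φ(s) ds. -/
noncomputable def stdNormalCdf (a : ℝ) : ℝ :=
  ∫ s in Set.Iio a, stdNormalPdf s

/-- d(λ, x) = ln(x/K)/√λ + √λ/2. -/
noncomputable def bsD (K lam x : ℝ) : ℝ :=
  Real.log (x / K) / Real.sqrt lam + Real.sqrt lam / 2

/-- Black–Scholes call price with strike K, zero interest rate and total
remaining variance λ: Ĉ(λ, x) = x Φ(d(λ, x)) − K Φ(d(λ, x) − √λ). -/
noncomputable def bsPrice (K lam x : ℝ) : ℝ :=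
  x * stdNormalCdf (bsD K lam x) - K * stdNormalCdf (bsD K lam x - Real.sqrt lam)

/-- ϖ₀(z) = 1 + (1+z)^{−1/2}·1_{−1<z≤0}. -/
noncomputable def varpi0 (z : ℝ) : ℝ :=
  1 + (if -1 < z ∧ z ≤ 0 then (1 + z) ^ (-(1 / 2) : ℝ) else 0)

/-!
Since `d(λ, ·)` is increasing, the jump of the delta between `a ≤ b` is at most the Gaussian
tail `∫_{d(λ,a)}^∞ φ`. The Chernoff bound `φ(s) ≤ (2π)^{-1/2} e^{t²/2 - ts}` with `t = √λ/2`
bounds this tail by `2 (2π)^{-1/2} λ^{-1/2} e^{λ/8 - √λ d(λ,a)/2} ≤ √K a^{-1/2} λ^{-1/2} e^{-λ/8}`.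
For an upward jump take `a = x`; for a downward jump `a = x(1+z)`, which produces the factor
`(1+z)^{-1/2}` of `ϖ₀(z)`.
-/

open Real Set

lemma stdNormalPdf_nonneg (a : ℝ) : 0 ≤ stdNormalPdf a := by
  unfold stdNormalPdf; positivity

lemma integrable_stdNormalPdf : Integrable stdNormalPdf := by
  have h : stdNormalPdf = fun a => (√(2 * π))⁻¹ * exp (-(1 / 2) * a ^ 2) := by
    funext a; unfold stdNormalPdf; ring_nf
  rw [h]
  exact (integrable_exp_neg_mul_sq (by norm_num)).const_mul _

lemma stdNormalPdf_le_exp (t s : ℝ) :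
    stdNormalPdf s ≤ (√(2 * π))⁻¹ * exp (t ^ 2 / 2) * exp (-t * s) := by
  rw [mul_assoc, ← exp_add, stdNormalPdf]
  gcongr
  nlinarith [sq_nonneg (s - t)]

lemma integral_Ioi_stdNormalPdf_le (c : ℝ) {t : ℝ} (ht : 0 < t) :
    ∫ s in Ioi c, stdNormalPdf s ≤ (√(2 * π))⁻¹ * exp (t ^ 2 / 2) * (exp (-t * c) / t) := by
  have hexp : ∫ s in Ioi c, exp (-t * s) = exp (-t * c) / t := by
    rw [integral_exp_mul_Ioi (by linarith), neg_div_neg_eq]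
  calc ∫ s in Ioi c, stdNormalPdf s
      ≤ ∫ s in Ioi c, (√(2 * π))⁻¹ * exp (t ^ 2 / 2) * exp (-t * s) :=
        setIntegral_mono_on integrable_stdNormalPdf.integrableOn
          ((exp_neg_integrableOn_Ioi c ht).const_mul _) measurableSet_Ioi
          fun s _ => stdNormalPdf_le_exp t s
    _ = _ := by rw [integral_const_mul, hexp]

lemma stdNormalCdf_sub_eq_integral_Ioc {a b : ℝ} (hab : a ≤ b) :
    stdNormalCdf b - stdNormalCdf a = ∫ s in Ioc a b, stdNormalPdf s := by
  unfold stdNormalCdf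
  rw [← integral_Iic_eq_integral_Iio, ← integral_Iic_eq_integral_Iio,
    intervalIntegral.integral_Iic_sub_Iic integrable_stdNormalPdf.integrableOn
      integrable_stdNormalPdf.integrableOn,
    intervalIntegral.integral_of_le hab]

lemma stdNormalCdf_monotone : Monotone stdNormalCdf := fun _ _ hab =>
  sub_nonneg.mp <| (stdNormalCdf_sub_eq_integral_Ioc hab).symm ▸
    setIntegral_nonneg measurableSet_Ioc fun s _ => stdNormalPdf_nonneg s

lemma stdNormalCdf_sub_le_integral_Ioi {a b : ℝ} (hab : a ≤ b) :
    stdNormalCdf b - stdNormalCdf a ≤ ∫ s in Ioi a, stdNormalPdf s := by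
  rw [stdNormalCdf_sub_eq_integral_Ioc hab]
  exact setIntegral_mono_set integrable_stdNormalPdf.integrableOn
    (Filter.Eventually.of_forall fun s => stdNormalPdf_nonneg s)
    (LE.le.eventuallyLE Ioc_subset_Ioi_self)

lemma bsD_monotoneOn (K lam : ℝ) : MonotoneOn (bsD K lam) (Ioi 0) := by
  intro x hx y hy hxy
  rcases eq_or_ne K 0 with rfl | hK
  · simp [bsD]
  unfold bsD
  rw [log_div (ne_of_gt hx) hK, log_div (ne_of_gt hy) hK]
  gcongr

lemma two_inv_sqrt_two_pi_le_one : 2 * (√(2 * π))⁻¹ ≤ 1 := by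
  rw [← div_eq_mul_inv, div_le_one (by positivity)]
  exact (le_sqrt (by norm_num) (by positivity)).mpr (by nlinarith [pi_gt_three])

lemma exp_chernoff_bsD {K lam a : ℝ} (hK : 0 < K) (hlam : 0 < lam) (ha : 0 < a) :
    exp ((√lam / 2) ^ 2 / 2) * exp (-(√lam / 2) * bsD K lam a)
      = √K * a ^ (-(1 / 2) : ℝ) * exp (-lam / 8) := by
  have hsqrt : √lam ^ 2 = lam := sq_sqrt hlam.le
  have hexponent : (√lam / 2) ^ 2 / 2 + -(√lam / 2) * bsD K lam a
      = log (a / K) * (-(1 / 2)) + -lam / 8 := by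
    unfold bsD
    field_simp
    rw [hsqrt]
    ring
  rw [← exp_add, hexponent, exp_add, ← rpow_def_of_pos (div_pos ha hK), div_rpow ha.le hK.le,
    rpow_neg hK.le, sqrt_eq_rpow]
  field_simp

lemma integral_Ioi_bsD_le {K lam a : ℝ} (hK : 0 < K) (hlam : 0 < lam) (ha : 0 < a) :
    ∫ s in Ioi (bsD K lam a), stdNormalPdf s
      ≤ √K * a ^ (-(1 / 2) : ℝ) * lam ^ (-(1 / 2) : ℝ) * exp (-lam / 8) := by
  have ht : 0 < √lam / 2 := by positivity
  have hlam_rpow : lam ^ (-(1 / 2) : ℝ) = (√lam)⁻¹ := by rw [rpow_neg hlam.le, sqrt_eq_rpow]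
  calc ∫ s in Ioi (bsD K lam a), stdNormalPdf s
      ≤ (√(2 * π))⁻¹ * exp ((√lam / 2) ^ 2 / 2)
          * (exp (-(√lam / 2) * bsD K lam a) / (√lam / 2)) :=
        integral_Ioi_stdNormalPdf_le _ ht
    _ = 2 * (√(2 * π))⁻¹ * (√lam)⁻¹
          * (exp ((√lam / 2) ^ 2 / 2) * exp (-(√lam / 2) * bsD K lam a)) := by
        field_simp
    _ = 2 * (√(2 * π))⁻¹ * (√K * a ^ (-(1 / 2) : ℝ) * lam ^ (-(1 / 2) : ℝ) * exp (-lam / 8)) := by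
        rw [exp_chernoff_bsD hK hlam ha, hlam_rpow]
        ring
    _ ≤ √K * a ^ (-(1 / 2) : ℝ) * lam ^ (-(1 / 2) : ℝ) * exp (-lam / 8) :=
        mul_le_of_le_one_left (by positivity) two_inv_sqrt_two_pi_le_one

lemma stdNormalCdf_bsD_sub_nonneg {K lam a b : ℝ} (ha : 0 < a) (hab : a ≤ b) :
    0 ≤ stdNormalCdf (bsD K lam b) - stdNormalCdf (bsD K lam a) :=
  sub_nonneg.mpr <| stdNormalCdf_monotone <| bsD_monotoneOn K lam ha (ha.trans_le hab) hab

lemma stdNormalCdf_bsD_sub_le {K lam a b : ℝ} (hK : 0 < K) (hlam : 0 < lam) (ha : 0 < a)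
    (hab : a ≤ b) :
    stdNormalCdf (bsD K lam b) - stdNormalCdf (bsD K lam a)
      ≤ √K * a ^ (-(1 / 2) : ℝ) * lam ^ (-(1 / 2) : ℝ) * exp (-lam / 8) :=
  (stdNormalCdf_sub_le_integral_Ioi (bsD_monotoneOn K lam ha (ha.trans_le hab) hab)).trans
    (integral_Ioi_bsD_le hK hlam ha)

lemma one_le_varpi0 {z : ℝ} (hz : -1 < z) : 1 ≤ varpi0 z := by
  unfold varpi0
  split_ifs
  · linarith [rpow_nonneg (show (0 : ℝ) ≤ 1 + z by linarith) (-(1 / 2) : ℝ)]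
  · norm_num

lemma rpow_neg_half_le_varpi0 {z : ℝ} (hz : -1 < z) (hz0 : z ≤ 0) :
    (1 + z) ^ (-(1 / 2) : ℝ) ≤ varpi0 z := by
  rw [varpi0, if_pos ⟨hz, hz0⟩]
  linarith

theorem bs_delta_jump_bound (K : ℝ) (hK : 0 < K) :
    ∃ C : ℝ, 0 < C ∧ ∀ lam x z : ℝ, 0 < lam → 0 < x → -1 < z →
      |stdNormalCdf (bsD K lam (x * (1 + z))) - stdNormalCdf (bsD K lam x)|
        ≤ C * x ^ (-(1 / 2) : ℝ) * lam ^ (-(1 / 2) : ℝ) * Real.exp (-lam / 8)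
            * varpi0 z := by
  refine ⟨√K, sqrt_pos.mpr hK, fun lam x z hlam hx hz => ?_⟩
  have h1z : 0 < 1 + z := by linarith
  have hbound_nonneg : 0 ≤ √K * x ^ (-(1 / 2) : ℝ) * lam ^ (-(1 / 2) : ℝ) * exp (-lam / 8) := by
    positivity
  rcases le_total z 0 with hz0 | hz0
  · have hdown : x * (1 + z) ≤ x := mul_le_of_le_one_right hx.le (by linarith)
    rw [abs_sub_comm, abs_of_nonneg (stdNormalCdf_bsD_sub_nonneg (mul_pos hx h1z) hdown)]
    calc _ ≤ √K * (x * (1 + z)) ^ (-(1 / 2) : ℝ) * lam ^ (-(1 / 2) : ℝ) * exp (-lam / 8) :=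
          stdNormalCdf_bsD_sub_le hK hlam (mul_pos hx h1z) hdown
      _ = √K * x ^ (-(1 / 2) : ℝ) * lam ^ (-(1 / 2) : ℝ) * exp (-lam / 8)
            * (1 + z) ^ (-(1 / 2) : ℝ) := by rw [mul_rpow hx.le h1z.le]; ring
      _ ≤ _ := mul_le_mul_of_nonneg_left (rpow_neg_half_le_varpi0 hz hz0) hbound_nonneg
  · have hup : x ≤ x * (1 + z) := le_mul_of_one_le_right hx.le (by linarith)
    rw [abs_of_nonneg (stdNormalCdf_bsD_sub_nonneg hx hup)]
    exact (stdNormalCdf_bsD_sub_le hK hlam hx hup).trans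
      (le_mul_of_one_le_right hbound_nonneg (one_le_varpi0 hz))
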